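/- arXiv:2301.12146 — 8 statements merged into one kernel-verified Lean document; each statement's English description precedes it below -/
import Mathlib

section
/- For any real numbers p and q with π/2 < q < π, the larger of |cos(p)| and |cos(p+q)| is at least cos(q/2). -/
theorem stmt_3 (p q : ℝ) (hq1 : Real.pi / 2 < q) (hq2 : q < Real.pi) :
    max |Real.cos p| |Real.cos (p + q)| ≥ Real.cos (q / 2) := by
  have hpi := Real.pi_pos
  have hC : Real.cos q ≤ 0 := Real.cos_nonpos_of_pi_div_two_le_of_le hq1.le (by linarith)
  have hchalf : 0 ≤ Real.cos (q / 2) :=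
    Real.cos_nonneg_of_mem_Icc ⟨by linarith, by linarith⟩
  have hsq : Real.cos (q / 2) ^ 2 = 1 / 2 + Real.cos q / 2 := by
    have := Real.cos_sq (q / 2); rwa [show 2 * (q / 2) = q by ring] at this
  have hadd : Real.cos (p + q) = Real.cos p * Real.cos q - Real.sin p * Real.sin q :=
    Real.cos_add p q
  have hp1 : Real.sin p ^ 2 + Real.cos p ^ 2 = 1 := Real.sin_sq_add_cos_sq p
  have hq1' : Real.sin q ^ 2 + Real.cos q ^ 2 = 1 := Real.sin_sq_add_cos_sq q
  -- key: cos²p + cos²(p+q) ≥ 1 + cos q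
  have hX : (Real.cos p ^ 2 - Real.sin p ^ 2) * Real.cos q
      - 2 * Real.cos p * Real.sin p * Real.sin q ≤ 1 := by
    nlinarith [sq_nonneg ((Real.cos p ^ 2 - Real.sin p ^ 2) * Real.sin q
        + 2 * Real.cos p * Real.sin p * Real.cos q),
      sq_nonneg ((Real.cos p ^ 2 - Real.sin p ^ 2) * Real.cos q
        - 2 * Real.cos p * Real.sin p * Real.sin q - 1), hp1, hq1',
      sq_nonneg (Real.sin p ^ 2 + Real.cos p ^ 2 - 1)]
  have key : Real.cos p ^ 2 + Real.cos (p + q) ^ 2 ≥ 1 + Real.cos q := by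
    rw [hadd]
    nlinarith [mul_nonneg (neg_nonneg.mpr hC) (sub_nonneg.mpr hX), hp1, hq1',
      sq_nonneg (Real.sin p * Real.sin q), sq_nonneg (Real.cos p * Real.cos q)]
  set M := max |Real.cos p| |Real.cos (p + q)| with hM
  have h1 : |Real.cos p| ≤ M := le_max_left _ _
  have h2 : |Real.cos (p + q)| ≤ M := le_max_right _ _
  have hM0 : 0 ≤ M := le_trans (abs_nonneg _) h1
  have hs1 : Real.cos p ^ 2 ≤ M ^ 2 := by
    rw [← sq_abs]; exact pow_le_pow_left₀ (abs_nonneg _) h1 2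
  have hs2 : Real.cos (p + q) ^ 2 ≤ M ^ 2 := by
    rw [← sq_abs]; exact pow_le_pow_left₀ (abs_nonneg _) h2 2
  nlinarith [sq_nonneg (M - Real.cos (q / 2)), sq_nonneg (M + Real.cos (q / 2))]
end

section
/- For any real numbers p and q with π/2 < q < π, 2(cos(p)^2 + cos(p+q)^2) ≥ 4·cos(q/2)^2. -/
theorem stmt_4 (p q : ℝ) (hq1 : Real.pi / 2 < q) (hq2 : q < Real.pi) :
    2 * (Real.cos p ^ 2 + Real.cos (p + q) ^ 2) ≥ 4 * Real.cos (q / 2) ^ 2 := by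
  have hcq : Real.cos q ≤ 0 := by
    apply le_of_lt
    apply Real.cos_neg_of_pi_div_two_lt_of_lt hq1
    linarith [Real.pi_pos]
  have hq' : Real.cos q = 2 * Real.cos (q / 2) ^ 2 - 1 := by
    have h := Real.cos_two_mul (q / 2)
    rw [show 2 * (q / 2) = q by ring] at h
    linarith
  have e1 : Real.cos (2 * p) = 2 * Real.cos p ^ 2 - 1 := Real.cos_two_mul p
  have e2 : Real.cos (2 * (p + q)) = 2 * Real.cos (p + q) ^ 2 - 1 :=
    Real.cos_two_mul (p + q)
  have e3 : Real.cos (2 * (p + q)) + Real.cos (2 * p)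
      = 2 * Real.cos (2 * p + q) * Real.cos q := by
    have ha := Real.cos_add (2 * p + q) q
    have hb := Real.cos_sub (2 * p + q) q
    rw [show 2 * p + q + q = 2 * (p + q) by ring, show 2 * p + q - q = 2 * p by ring] at *
    linarith
  have hle : Real.cos (2 * p + q) ≤ 1 := Real.cos_le_one _
  have hmul : Real.cos q * (Real.cos (2 * p + q) - 1) ≥ 0 :=
    by nlinarith
  nlinarith [hmul]
end

section
/- Let p, q, r be positive integers with no non-trivial common divisor, and suppose there exist integers a, c, d, f > 0 and b, e ≥ 0 with a·p = b·q + c·r and d·q = e·p + f·r. Then every integer N ≥ a·p + d·q + r can be written as N = x·p + y·q + z·r with x, y, z positive integers. -/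
set_option maxHeartbeats 1000000


theorem stmt_5 (p q r : ℤ) (hp : 0 < p) (hq : 0 < q) (hr : 0 < r)
    (hgcd : Int.gcd (Int.gcd p q) r = 1)
    (a b c d e f : ℤ) (ha : 0 < a) (hc : 0 < c) (hd : 0 < d) (hf : 0 < f)
    (hb : 0 ≤ b) (he : 0 ≤ e)
    (h1 : a * p = b * q + c * r) (h2 : d * q = e * p + f * r) :
    ∀ N : ℤ, a * p + d * q + r ≤ N →
      ∃ x y z : ℤ, 0 < x ∧ 0 < y ∧ 0 < z ∧ N = x * p + y * q + z * r := by
  intro N hN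
  have hNpos : 0 < N := by nlinarith
  -- Step A: some integer representation exists
  obtain ⟨u, v, w, hrep⟩ : ∃ u v w : ℤ, N = u * p + v * q + w * r := by
    have hA := Int.gcd_eq_gcd_ab ((Int.gcd p q : ℤ)) r
    rw [hgcd] at hA
    push_cast at hA
    have hB := Int.gcd_eq_gcd_ab p q
    exact ⟨N * Int.gcdA (↑(Int.gcd p q)) r * Int.gcdA p q,
           N * Int.gcdA (↑(Int.gcd p q)) r * Int.gcdB p q,
           N * Int.gcdB (↑(Int.gcd p q)) r,
           by linear_combination N * hA + N * Int.gcdA (↑(Int.gcd p q)) r * hB⟩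
  -- the two "zero moves"
  set S : ℤ := a * d - b * e with hS
  have keyX : S * p = (d * c + b * f) * r := by linear_combination d * h1 + b * h2
  have keyY : S * q = (e * c + a * f) * r := by linear_combination e * h1 + a * h2
  have hSpos : 0 < S := by
    have h0 : 0 < (e * c + a * f) * r := by positivity
    nlinarith [keyY, h0]
  have hS1 : 1 ≤ S := hSpos
  -- Step B: representation with x ≥ 1 and y ≥ 1
  set K : ℤ := max (1 - u) 0 with hK
  set M : ℤ := max (1 - v) 0 with hM
  have hKu : 1 - u ≤ K := le_max_left _ _
  have hK0 : 0 ≤ K := le_max_right _ _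
  have hMv : 1 - v ≤ M := le_max_left _ _
  have hM0 : 0 ≤ M := le_max_right _ _
  have hx0 : 1 ≤ u + K * S := by nlinarith [mul_le_mul_of_nonneg_left hS1 hK0]
  have hy0 : 1 ≤ v + M * S := by nlinarith [mul_le_mul_of_nonneg_left hS1 hM0]
  have hrep0 : N = (u + K * S) * p + (v + M * S) * q
      + (w - K * (d * c + b * f) - M * (e * c + a * f)) * r := by
    linear_combination hrep - K * keyX - M * keyY
  -- Step C: take the representation (with x,y ≥ 1) of maximal z
  have Hinh : ∃ z : ℤ, ∃ x y : ℤ, 1 ≤ x ∧ 1 ≤ y ∧ N = x * p + y * q + z * r :=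
    ⟨_, _, _, hx0, hy0, hrep0⟩
  have Hbdd : ∃ b0 : ℤ, ∀ z : ℤ,
      (∃ x y : ℤ, 1 ≤ x ∧ 1 ≤ y ∧ N = x * p + y * q + z * r) → z ≤ b0 := by
    refine ⟨N, fun z ⟨x, y, hx, hy, hz⟩ => ?_⟩
    rcases le_or_gt z 0 with h | h
    · linarith
    · have h1z : 1 ≤ z := h
      have : z * r ≤ N := by nlinarith
      nlinarith
  obtain ⟨Z, ⟨X, Y, hX, hY, hRep⟩, hmax⟩ := Int.exists_greatest_of_bdd Hbdd Hinh
  rcases lt_or_ge Z 1 with hZ | hZ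
  · exfalso
    have hZ0 : Z ≤ 0 := by omega
    have hxa : X ≤ a := by
      by_contra hcon
      push_neg at hcon
      have hP : ∃ x y : ℤ, 1 ≤ x ∧ 1 ≤ y ∧ N = x * p + y * q + (Z + c) * r :=
        ⟨X - a, Y + b, by linarith, by linarith, by linear_combination hRep + h1⟩
      have := hmax _ hP
      linarith
    have hyd : Y ≤ d := by
      by_contra hcon
      push_neg at hcon
      have hP : ∃ x y : ℤ, 1 ≤ x ∧ 1 ≤ y ∧ N = x * p + y * q + (Z + f) * r :=
        ⟨X + e, Y - d, by linarith, by linarith, by linear_combination hRep + h2⟩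
      have := hmax _ hP
      linarith
    nlinarith [mul_le_mul_of_nonneg_right hxa hp.le,
      mul_le_mul_of_nonneg_right hyd hq.le,
      mul_nonpos_of_nonpos_of_nonneg hZ0 hr.le]
  · exact ⟨X, Y, Z, by linarith, by linarith, by linarith, hRep⟩
end

section
/- Let φ be the unique real root of x³ = x² + x + 1. Let x be the tribonacci sequence with x_1 = 1, x_2 = 0, x_3 = 0 (so x_i = x_{i-1} + x_{i-2} + x_{i-3} for i ≥ 4). Then x_k < φ^k / 11 for all k ≥ 4. -/
theorem stmt_8 (φ : ℝ) (hφ : φ ^ 3 = φ ^ 2 + φ + 1) (x : ℕ → ℤ)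
    (hx1 : x 1 = 1) (hx2 : x 2 = 0) (hx3 : x 3 = 0)
    (hrec : ∀ i, 4 ≤ i → x i = x (i - 1) + x (i - 2) + x (i - 3)) :
    ∀ k, 4 ≤ k → (x k : ℝ) < φ ^ k / 11 := by
  have hφ3 : φ > 1.83 := by nlinarith [sq_nonneg (φ + 1), sq_nonneg φ, sq_nonneg (φ - 1), sq_nonneg (φ - 1.83)]
  have hφ0 : (0:ℝ) < φ := by linarith
  have h4 : (11:ℝ) < φ ^ 4 := by nlinarith
  have hx4 : x 4 = 1 := by
    have e := hrec 4 (by norm_num)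
    norm_num at e
    rw [e, hx1, hx2, hx3]; ring
  have key : ∀ k, 2 ≤ k → (x k : ℝ) < φ ^ k / 11 := by
    intro k
    induction k using Nat.strong_induction_on with
    | _ k ih =>
      intro hk
      match k, hk with
      | 2, _ => rw [hx2]; push_cast; positivity
      | 3, _ => rw [hx3]; push_cast; positivity
      | 4, _ =>
        rw [hx4]; push_cast
        rw [lt_div_iff₀ (by norm_num : (0:ℝ) < 11)]
        linarith
      | (n+5), _ =>
        have e := hrec (n+5) (by omega)
        have e1 : n + 5 - 1 = n + 4 := by omega
        have e2 : n + 5 - 2 = n + 3 := by omega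
        have e3 : n + 5 - 3 = n + 2 := by omega
        rw [e1, e2, e3] at e
        have h1 := ih (n+4) (by omega) (by omega)
        have h2 := ih (n+3) (by omega) (by omega)
        have h3 := ih (n+2) (by omega) (by omega)
        have hsum : φ^(n+4) + φ^(n+3) + φ^(n+2) = φ^(n+5) := by
          have h5 : φ^(n+5) = φ^(n+2) * φ^3 := by ring
          rw [h5, hφ]; ring
        rw [e]; push_cast
        linarith
  intro k hk
  exact key k (by omega)
end

section
/- Let n ≥ 2 and let ⟨a_i⟩ be an integer reverse-tribonacci sequence (a_i = a_{i+1} + a_{i+2} + a_{i+3} for all i ≥ 1) with a_1 = 0. If a_n = 0 and a_{n+1} = 0, then a_i = 0 for all i. -/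
private def T12 : ℕ → ℤ
  | 0 => 0
  | 1 => 1
  | 2 => 1
  | (k+3) => T12 k + T12 (k+1) + T12 (k+2)

private lemma T12_pos : ∀ k, 0 ≤ T12 k ∧ 1 ≤ T12 (k+1) ∧ 1 ≤ T12 (k+2) := by
  intro k
  induction k with
  | zero => refine ⟨le_refl _, le_refl _, le_refl _⟩
  | succ k ih =>
    obtain ⟨h0, h1, h2⟩ := ih
    refine ⟨by linarith, h2, ?_⟩
    show 1 ≤ T12 k + T12 (k+1) + T12 (k+2)
    linarith

private lemma combo12 (a : ℕ → ℤ)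
    (hrec : ∀ i, 1 ≤ i → a i = a (i + 1) + a (i + 2) + a (i + 3)) :
    ∀ k m, 1 ≤ m →
      a m = T12 (k+1) * a (m+k) + (T12 (k+2) - T12 (k+1)) * a (m+k+1)
            + T12 k * a (m+k+2) := by
  intro k
  induction k with
  | zero =>
    intro m hm
    show a m = T12 1 * a (m+0) + (T12 2 - T12 1) * a (m+0+1) + T12 0 * a (m+0+2)
    simp [T12]
  | succ k ih =>
    intro m hm
    have h := ih m hm
    have hr := hrec (m+k) (by omega)
    have hT : T12 (k+3) = T12 k + T12 (k+1) + T12 (k+2) := rfl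
    simp only [show m+(k+1) = m+k+1 from by omega, show m+k+1+1 = m+k+2 from by omega,
      show m+k+1+2 = m+k+3 from by omega, show k+1+1 = k+2 from rfl,
      show k+1+2 = k+3 from rfl]
    rw [hT]
    rw [hr] at h
    linarith [h]

theorem stmt_12 (a : ℕ → ℤ)
    (hrec : ∀ i, 1 ≤ i → a i = a (i + 1) + a (i + 2) + a (i + 3))
    (h1 : a 1 = 0) (n : ℕ) (hn : 2 ≤ n) (hzn : a n = 0) (hzn1 : a (n + 1) = 0) :
    ∀ i, 1 ≤ i → a i = 0 := by
  -- first: a (n+2) = 0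
  have key := combo12 a hrec (n-1) 1 (le_refl 1)
  have e1 : 1 + (n-1) = n := by omega
  have e2 : n - 1 + 1 = n := by omega
  rw [e1] at key
  have hTpos : 1 ≤ T12 (n-1) := by
    have := T12_pos (n-2)
    have : 1 ≤ T12 (n-2+1) := this.2.1
    have e : n - 2 + 1 = n - 1 := by omega
    rwa [e] at this
  have hn2 : a (n+2) = 0 := by
    rw [h1, hzn, hzn1] at key
    have : T12 (n-1) * a (n+2) = 0 := by linarith
    rcases mul_eq_zero.mp this with h | h
    · linarith
    · exact h
  -- zeros propagate forward from n
  have fwd : ∀ j, a (n+j) = 0 ∧ a (n+j+1) = 0 ∧ a (n+j+2) = 0 := by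
    intro j
    induction j with
    | zero => exact ⟨hzn, hzn1, hn2⟩
    | succ j ih =>
      obtain ⟨h0, h1', h2⟩ := ih
      refine ⟨h1', h2, ?_⟩
      have hr := hrec (n+j) (by omega)
      have e : n + (j+1) + 2 = n + j + 3 := by ring
      rw [e]
      have e' : n + (j+1) = n + j + 1 := by ring
      rw [h0, h1', h2] at hr
      linarith
  intro i hi
  rcases le_or_gt i n with h | h
  · -- use combo with k = n - i
    have c := combo12 a hrec (n-i) i hi
    have e : i + (n-i) = n := by omega
    rw [e] at c
    rw [hzn, hzn1, hn2] at c
    linarith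
  · have := (fwd (i - n)).1
    have e : n + (i - n) = i := by omega
    rwa [e] at this
end

section
/- Let φ be the real root of x³ = x² + x + 1. There is a constant c > 0 (one may take c = 0.01) such that for every non-zero integer reverse-tribonacci sequence ⟨a_i⟩ with a_1 = 0 and every integer n ≥ 2, either |a_n| > c·φ^{n/2} or |a_{n+1}| > c·φ^{(n+1)/2}. -/
private lemma gdescent : ∀ N : ℕ, ∀ x y z : ℤ, x.natAbs + y.natAbs + z.natAbs ≤ N →
    x^3 - 2*x^2*y - x^2*z - 2*x*y*z + x*z^2 + 2*y^3 + 2*y^2*z + 2*y*z^2 + z^3 = 0 →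
    x = 0 ∧ y = 0 ∧ z = 0 := by
  intro N
  induction N with
  | zero =>
    intro x y z hs _
    refine ⟨?_, ?_, ?_⟩ <;> omega
  | succ N ih =>
    intro x y z hs heq
    have h3 : ∀ u v w : ZMod 3, u^3 - 2*u^2*v - u^2*w - 2*u*v*w + u*w^2 + 2*v^3 + 2*v^2*w + 2*v*w^2 + w^3 = 0 → u = 0 ∧ v = 0 ∧ w = 0 := by decide
    have hc : ((x : ZMod 3))^3 - 2*(x:ZMod 3)^2*(y:ZMod 3) - (x:ZMod 3)^2*(z:ZMod 3) - 2*(x:ZMod 3)*(y:ZMod 3)*(z:ZMod 3) + (x:ZMod 3)*(z:ZMod 3)^2 + 2*(y:ZMod 3)^3 + 2*(y:ZMod 3)^2*(z:ZMod 3) + 2*(y:ZMod 3)*(z:ZMod 3)^2 + (z:ZMod 3)^3 = 0 := by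
      have := congrArg (fun t : ℤ => (t : ZMod 3)) heq
      push_cast at this
      convert this using 1 <;> push_cast <;> ring
    obtain ⟨hu, hv, hw⟩ := h3 _ _ _ hc
    rw [ZMod.intCast_zmod_eq_zero_iff_dvd] at hu hv hw
    obtain ⟨x', rfl⟩ := hu
    obtain ⟨y', rfl⟩ := hv
    obtain ⟨z', rfl⟩ := hw
    have heq' : x'^3 - 2*x'^2*y' - x'^2*z' - 2*x'*y'*z' + x'*z'^2 + 2*y'^3 + 2*y'^2*z' + 2*y'*z'^2 + z'^3 = 0 := by
      have h27 : (27:ℤ) * (x'^3 - 2*x'^2*y' - x'^2*z' - 2*x'*y'*z' + x'*z'^2 + 2*y'^3 + 2*y'^2*z' + 2*y'*z'^2 + z'^3) = 0 := by linear_combination heq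
      linarith
    have hna : (3*x').natAbs = 3 * x'.natAbs ∧ (3*y').natAbs = 3 * y'.natAbs ∧ (3*z').natAbs = 3 * z'.natAbs := by
      refine ⟨?_, ?_, ?_⟩ <;> simp [Int.natAbs_mul]
    by_cases h0 : x'.natAbs + y'.natAbs + z'.natAbs = 0
    · refine ⟨?_, ?_, ?_⟩ <;> omega
    · have hle : x'.natAbs + y'.natAbs + z'.natAbs ≤ N := by omega
      obtain ⟨a, b, c⟩ := ih x' y' z' hle heq'
      refine ⟨?_, ?_, ?_⟩ <;> omega

private lemma backpos (a : ℕ → ℤ) (ha : ∀ i, 1 ≤ i → a i = a (i+1) + a (i+2) + a (i+3))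
    (n : ℕ) (hn : 2 ≤ n) (h0 : a n = 0) (h1 : a (n+1) = 0) (ht : 0 < a (n+2)) : 0 < a 1 := by
  have key : ∀ k, k ≤ n + 1 → (0 ≤ a (n+2-k) ∧ (3 ≤ k → 0 < a (n+2-k))) := by
    intro k
    induction k using Nat.strong_induction_on with
    | _ k ihk =>
      intro hk
      match k with
      | 0 => exact ⟨le_of_lt ht, by omega⟩
      | 1 => refine ⟨by rw [show n+2-1 = n+1 from rfl, h1], by omega⟩
      | 2 => refine ⟨by rw [show n+2-2 = n from rfl, h0], by omega⟩
      | (m+3) =>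
        have hj1 : 1 ≤ n + 2 - (m+3) := by omega
        have hrec := ha (n+2-(m+3)) hj1
        have e1 : n+2-(m+3)+1 = n+2-(m+2) := by omega
        have e2 : n+2-(m+3)+2 = n+2-(m+1) := by omega
        have e3 : n+2-(m+3)+3 = n+2-m := by omega
        rw [e1, e2, e3] at hrec
        have i1 := ihk (m+2) (by omega) (by omega)
        have i2 := ihk (m+1) (by omega) (by omega)
        have i3 := ihk m (by omega) (by omega)
        rcases Nat.eq_zero_or_pos m with rfl | hm
        · have : a (n+2-0) = a (n+2) := rfl
          constructor
          · rw [hrec]; have := i1.1; have := i2.1; omega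
          · intro _; rw [hrec]; have := i1.1; have := i2.1; omega
        · have hpos : 0 < a (n+2-(m+2)) := i1.2 (by omega)
          constructor
          · rw [hrec]; have := i2.1; have := i3.1; omega
          · intro _; rw [hrec]; have := i2.1; have := i3.1; omega
  have := key (n+1) (le_refl _)
  have e : n + 2 - (n+1) = 1 := by omega
  rw [e] at this
  exact this.2 (by omega)

set_option maxHeartbeats 4000000 in
theorem stmt_13 (φ : ℝ) (hφ : φ ^ 3 = φ ^ 2 + φ + 1) :
    ∃ c : ℝ, 0 < c ∧ ∀ a : ℕ → ℤ,
      (∀ i, 1 ≤ i → a i = a (i + 1) + a (i + 2) + a (i + 3)) →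
      a 1 = 0 → (∃ i, 1 ≤ i ∧ a i ≠ 0) →
      ∀ n : ℕ, 2 ≤ n →
        (|(a n : ℝ)| > c * φ ^ ((n : ℝ) / 2) ∨
         |(a (n + 1) : ℝ)| > c * φ ^ (((n : ℝ) + 1) / 2)) := by
  have hφ1 : (1.8 : ℝ) < φ := by nlinarith [sq_nonneg (φ + 2/5), sq_nonneg (φ - 1.8), sq_nonneg φ]
  have hφ2 : φ < 1.9 := by nlinarith [sq_nonneg (φ + 0.45), sq_nonneg (φ - 1.9), sq_nonneg φ]
  have hφpos : (0:ℝ) < φ := by linarith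
  obtain ⟨β, hβ⟩ : ∃ b : ℝ, b = φ^2 - φ - 1 := ⟨_, rfl⟩
  have hβφ : φ * β = 1 := by rw [hβ]; linear_combination hφ
  have hβ1 : (0.52 : ℝ) < β := by nlinarith
  have hβ2 : β < 0.56 := by nlinarith
  refine ⟨1/100, by norm_num, ?_⟩
  intro a ha h1 hnz
  -- real-cast recurrence
  have hcast : ∀ i, 1 ≤ i → (a (i+3) : ℝ) = (a i : ℝ) - (a (i+1) : ℝ) - (a (i+2) : ℝ) := by
    intro i hi
    have h := ha i hi
    have : (a i : ℝ) = (a (i+1) : ℝ) + (a (i+2) : ℝ) + (a (i+3) : ℝ) := by exact_mod_cast congrArg (fun t : ℤ => (t : ℝ)) h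
    linarith
  -- sequences
  obtain ⟨v, hv⟩ : ∃ v : ℕ → ℝ, ∀ i, v i = (a (i+1) : ℝ) - β * (a i : ℝ) := ⟨_, fun i => rfl⟩
  obtain ⟨w, hw⟩ : ∃ w : ℕ → ℝ, ∀ i, w i = (a (i+2) : ℝ) + (1+β) * (a (i+1) : ℝ) + φ * (a i : ℝ) := ⟨_, fun i => rfl⟩
  obtain ⟨F, hF⟩ : ∃ F : ℕ → ℝ, ∀ i, F i = (v (i+1))^2 + (1+β) * v i * v (i+1) + φ * (v i)^2 := ⟨_, fun i => rfl⟩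
  have hwstep : ∀ i, 1 ≤ i → w (i+1) = β * w i := by
    intro i hi
    rw [hw, hw, show i+1+2 = i+3 from rfl, show i+1+1 = i+2 from rfl, hβ]
    linear_combination (-φ*(a (i+1):ℝ) - (a i:ℝ) + (a (i+1):ℝ)) * hφ + hcast i hi
  have hFstep : ∀ i, 1 ≤ i → F (i+1) = φ * F i := by
    intro i hi
    rw [hF, hF, show i+1+1 = i+2 from rfl, hv, hv, hv,
      show i+2+1 = i+3 from rfl, show i+1+1 = i+2 from rfl, hβ]
    linear_combination (-φ^4*(a i:ℝ)*(a (i+1):ℝ) - φ^3*(a i:ℝ)^2 + 2*φ^3*(a i:ℝ)*(a (i+1):ℝ) + φ^3*(a (i+1):ℝ)*(a (i+2):ℝ) + φ^2*(a i:ℝ)^2 + φ^2*(a i:ℝ)*(a (i+2):ℝ) + φ^2*(a (i+1):ℝ)^2 - 2*φ^2*(a (i+1):ℝ)*(a (i+2):ℝ) + φ*(a i:ℝ)^2 - φ*(a i:ℝ)*(a (i+1):ℝ) - φ*(a i:ℝ)*(a (i+2):ℝ) + φ*(a (i+1):ℝ)*(a (i+2):ℝ) - (a i:ℝ)^2 +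 2*(a i:ℝ)*(a (i+1):ℝ) - (a (i+1):ℝ)^2) * hφ + (-φ^4*(a (i+1):ℝ) + 2*φ^3*(a (i+1):ℝ) - φ^2*(a (i+2):ℝ) - φ*(a (i+1):ℝ) + φ*(a (i+2):ℝ) + (a i:ℝ) - (a (i+1):ℝ) + (a (i+2):ℝ) + (a (i+3):ℝ)) * (hcast i hi)
  have hinv : ∀ i, w i * F i = (a i:ℝ)^3 - 2*(a i:ℝ)^2*(a (i+1):ℝ) - (a i:ℝ)^2*(a (i+2):ℝ) - 2*(a i:ℝ)*(a (i+1):ℝ)*(a (i+2):ℝ) + (a i:ℝ)*(a (i+2):ℝ)^2 + 2*(a (i+1):ℝ)^3 + 2*(a (i+1):ℝ)^2*(a (i+2):ℝ) + 2*(a (i+1):ℝ)*(a (i+2):ℝ)^2 + (a (i+2):ℝ)^3 := by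
    intro i
    rw [hw, hF, hv, hv, show i+1+1 = i+2 from rfl, hβ]
    linear_combination (φ^5*(a i:ℝ)*(a (i+1):ℝ)^2 + 2*φ^4*(a i:ℝ)^2*(a (i+1):ℝ) - 3*φ^4*(a i:ℝ)*(a (i+1):ℝ)^2 + φ^3*(a i:ℝ)^3 - 4*φ^3*(a i:ℝ)^2*(a (i+1):ℝ) + 2*φ^3*(a i:ℝ)*(a (i+1):ℝ)^2 - φ^2*(a i:ℝ)^3 - φ*(a i:ℝ)^3 + 2*φ*(a i:ℝ)^2*(a (i+1):ℝ) - φ*(a i:ℝ)*(a (i+1):ℝ)^2 - φ*(a i:ℝ)*(a (i+1):ℝ)*(a (i+2):ℝ) - φ*(a i:ℝ)*(a (i+2):ℝ)^2 - φ*(a (i+1):ℝ)^3 - φ*(a (i+1):ℝ)^2*(a (i+2):ℝ) + (a i:ℝ)^3 - 2*(a i:ℝ)^2*(a (i+1):ℝ) - (a i:ℝ)^2*(a (i+2):ℝ) - 2*(a i:ℝ)*(a (i+1):ℝ)*(a (i+2):ℝ) + (a i:ℝ)*(a (i+2):ℝ)^2 + 2*(a (i+1):ℝ)^3 + (a (i+1):ℝ)^2*(a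 (i+2):ℝ)) * hφ
  have hwpow : ∀ k, w (1+k) = β^k * w 1 := by
    intro k
    induction k with
    | zero => simp
    | succ k ih =>
      have : w (1+(k+1)) = w ((1+k)+1) := by rw [show 1+(k+1) = (1+k)+1 from by omega]
      rw [this, hwstep (1+k) (by omega), ih, pow_succ]
      ring
  have hFpow : ∀ k, F (1+k) = φ^k * F 1 := by
    intro k
    induction k with
    | zero => simp
    | succ k ih =>
      have : F (1+(k+1)) = F ((1+k)+1) := by rw [show 1+(k+1) = (1+k)+1 from by omega]
      rw [this, hFstep (1+k) (by omega), ih, pow_succ]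
      ring
  -- the integer invariant is nonzero
  have hazero : (¬ (a 1 = 0 ∧ a 2 = 0 ∧ a 3 = 0)) := by
    rintro ⟨z1, z2, z3⟩
    obtain ⟨i, hi, hne⟩ := hnz
    have hall : ∀ k, 1 ≤ k → a k = 0 := by
      intro k
      induction k using Nat.strong_induction_on with
      | _ k ihk =>
        intro hk
        match k with
        | 1 => exact z1
        | 2 => exact z2
        | 3 => exact z3
        | (m+4) =>
          have h := ha (m+1) (by omega)
          have i1 := ihk (m+1) (by omega) (by omega)
          have i2 := ihk (m+2) (by omega) (by omega)
          have i3 := ihk (m+3) (by omega) (by omega)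
          rw [show m+1+1 = m+2 from rfl, show m+1+2 = m+3 from rfl, show m+1+3 = m+4 from rfl] at h
          omega
    exact hne (hall i hi)
  have hGnz : (a 1)^3 - 2*(a 1)^2*(a 2) - (a 1)^2*(a 3) - 2*(a 1)*(a 2)*(a 3) + (a 1)*(a 3)^2 + 2*(a 2)^3 + 2*(a 2)^2*(a 3) + 2*(a 2)*(a 3)^2 + (a 3)^3 ≠ 0 := by
    intro h
    obtain ⟨e1, e2, e3⟩ := gdescent _ (a 1) (a 2) (a 3) le_rfl h
    exact hazero ⟨e1, e2, e3⟩
  have hG1 : (1:ℝ) ≤ |w 1 * F 1| := by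
    have h := hinv 1
    rw [show (1:ℕ)+1 = 2 from rfl, show (1:ℕ)+2 = 3 from rfl] at h
    have : w 1 * F 1 = (((a 1)^3 - 2*(a 1)^2*(a 2) - (a 1)^2*(a 3) - 2*(a 1)*(a 2)*(a 3) + (a 1)*(a 3)^2 + 2*(a 2)^3 + 2*(a 2)^2*(a 3) + 2*(a 2)*(a 3)^2 + (a 3)^3 : ℤ) : ℝ) := by
      rw [h]; push_cast; ring
    rw [this]
    rw [← Int.cast_abs]
    have : (1:ℤ) ≤ |(a 1)^3 - 2*(a 1)^2*(a 2) - (a 1)^2*(a 3) - 2*(a 1)*(a 2)*(a 3) + (a 1)*(a 3)^2 + 2*(a 2)^3 + 2*(a 2)^2*(a 3) + 2*(a 2)*(a 3)^2 + (a 3)^3| :=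
      Int.one_le_abs hGnz
    exact_mod_cast this
  have hFlow : ∀ i, (1/2) * ((v i)^2 + (v (i+1))^2) ≤ F i := by
    intro i
    rw [hF]
    nlinarith [sq_nonneg (v (i+1) + (1+β) * v i), mul_nonneg (show (0:ℝ) ≤ φ - 1/2 - (1+β)^2/2 by nlinarith) (sq_nonneg (v i))]
  have hFhigh : ∀ i, F i ≤ (5/2) * ((v i)^2 + (v (i+1))^2) := by
    intro i
    rw [hF]
    nlinarith [sq_nonneg (3 * v (i+1) - (1+β) * v i), mul_nonneg (show (0:ℝ) ≤ 5/2 - φ - (1+β)^2/6 by nlinarith) (sq_nonneg (v i))]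
  have hF1nn : 0 ≤ F 1 := by nlinarith [hFlow 1, sq_nonneg (v 1), sq_nonneg (v 2)]
  have hw1v : w 1 = v 2 + (1 + 2*β) * v 1 := by
    have h1' : (a 1 : ℝ) = 0 := by exact_mod_cast congrArg (fun t : ℤ => (t:ℝ)) h1
    rw [hw, hv, hv]
    linear_combination (φ + β + 2*β^2) * h1'
  have hw1sq : (w 1)^2 ≤ 20 * F 1 := by
    have hl := hFlow 1
    rw [show (1:ℕ)+1 = 2 from rfl] at hl
    rw [hw1v]
    nlinarith [hl, mul_nonneg (show (0:ℝ) ≤ 1+2*β by linarith) (sq_nonneg (v 1 - v 2)),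
      mul_nonneg (show (0:ℝ) ≤ 9/2 - (1+2*β)^2 by nlinarith) (sq_nonneg (v 1)),
      mul_nonneg (show (0:ℝ) ≤ 212/100 - (1+2*β) by linarith) (sq_nonneg (v 2)),
      mul_nonneg (show (0:ℝ) ≤ 212/100 - (1+2*β) by linarith) (sq_nonneg (v 1)),
      sq_nonneg (v 1), sq_nonneg (v 2)]
  have hF1pos : 1/3 ≤ F 1 := by
    have habs : 1 ≤ |w 1| * F 1 := by
      rw [abs_mul, abs_of_nonneg hF1nn] at hG1; exact hG1
    have h2 : 1 ≤ (w 1)^2 * (F 1)^2 := by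
      have : (1:ℝ) ≤ (|w 1| * F 1)^2 := by nlinarith
      rw [mul_pow, sq_abs] at this
      exact this
    have h3 : (w 1)^2 * (F 1)^2 ≤ 20 * F 1 * (F 1)^2 := by
      apply mul_le_mul_of_nonneg_right hw1sq (sq_nonneg (F 1))
    have h4 : (1:ℝ) ≤ 20 * F 1 ^ 3 := by
      have e : 20 * F 1 * (F 1)^2 = 20 * F 1 ^ 3 := by ring
      linarith
    by_contra hc
    push_neg at hc
    have q1 : F 1 ^ 3 ≤ (1/3:ℝ)^3 := by
      have := pow_le_pow_left₀ hF1nn (le_of_lt hc) 3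
      simpa using this
    norm_num at q1
    linarith
  intro n hn
  by_contra hcon
  push_neg at hcon
  obtain ⟨hA, hB⟩ := hcon
  have htpos : (0:ℝ) < φ ^ ((n:ℝ)/2) := Real.rpow_pos_of_pos hφpos _
  have ht2 : (φ ^ ((n:ℝ)/2))^2 = φ ^ n := by
    rw [← Real.rpow_natCast (φ ^ ((n:ℝ)/2)) 2, ← Real.rpow_mul (le_of_lt hφpos)]
    rw [show ((n:ℝ)/2) * ((2:ℕ):ℝ) = (n:ℝ) by push_cast; ring]
    exact Real.rpow_natCast φ n
  have hhalfsq : (φ ^ ((1:ℝ)/2))^2 = φ := by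
    rw [← Real.rpow_natCast (φ ^ ((1:ℝ)/2)) 2, ← Real.rpow_mul (le_of_lt hφpos)]
    rw [show ((1:ℝ)/2) * ((2:ℕ):ℝ) = (1:ℝ) by push_cast; ring]
    exact Real.rpow_one φ
  have hhalfpos : (0:ℝ) < φ ^ ((1:ℝ)/2) := Real.rpow_pos_of_pos hφpos _
  have hhalf : φ ^ ((1:ℝ)/2) ≤ 1.4 := by
    by_contra hc
    push_neg at hc
    have h2 : (1.4:ℝ)*(1.4:ℝ) < (φ ^ ((1:ℝ)/2)) * (φ ^ ((1:ℝ)/2)) :=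
      mul_self_lt_mul_self (by norm_num) hc
    have h3 : (φ ^ ((1:ℝ)/2)) * (φ ^ ((1:ℝ)/2)) = φ := by
      rw [← pow_two]
      exact hhalfsq
    rw [h3] at h2
    linarith
  have hB' : |(a (n+1) : ℝ)| ≤ (1.4/100) * φ ^ ((n:ℝ)/2) := by
    have e : φ ^ (((n:ℝ)+1)/2) = φ ^ ((n:ℝ)/2) * φ ^ ((1:ℝ)/2) := by
      rw [← Real.rpow_add hφpos]
      congr 1
      ring
    rw [e] at hB
    have hmm : φ ^ ((n:ℝ)/2) * φ ^ ((1:ℝ)/2) ≤ φ ^ ((n:ℝ)/2) * 1.4 :=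
      mul_le_mul_of_nonneg_left hhalf (le_of_lt htpos)
    calc |(a (n+1) : ℝ)| ≤ 1/100 * (φ ^ ((n:ℝ)/2) * φ ^ ((1:ℝ)/2)) := hB
    _ ≤ 1/100 * (φ ^ ((n:ℝ)/2) * 1.4) := by linarith
    _ = (1.4/100) * φ ^ ((n:ℝ)/2) := by ring
  obtain ⟨t, htdef⟩ : ∃ t : ℝ, t = φ ^ ((n:ℝ)/2) := ⟨_, rfl⟩
  rw [← htdef] at hA hB' ht2 htpos
  rcases lt_or_ge n 8 with h8 | h8
  · -- small case: both terms must be zero integers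
    have htle : t ≤ 14 := by
      rw [htdef]
      have h4 : φ ^ ((n:ℝ)/2) ≤ φ ^ (4:ℝ) := by
        apply Real.rpow_le_rpow_of_exponent_le (by linarith)
        have h7 : (n:ℝ) ≤ 7 := by exact_mod_cast (by omega : n ≤ 7)
        linarith
      have e4 : φ ^ (4:ℝ) = φ^(4:ℕ) := by
        rw [← Real.rpow_natCast φ 4]
        norm_num
      rw [e4] at h4
      have h5 : φ^(4:ℕ) ≤ (1.9:ℝ)^(4:ℕ) := pow_le_pow_left₀ (le_of_lt hφpos) (le_of_lt hφ2) 4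
      norm_num at h5
      linarith
    have han : a n = 0 := by
      have h1r : |(a n : ℝ)| < 1 := by
        calc |(a n : ℝ)| ≤ 1/100 * t := hA
        _ ≤ 1/100 * 14 := by linarith
        _ < 1 := by norm_num
      have h2 : |a n| < (1:ℤ) := by
        rw [← Int.cast_abs] at h1r
        exact_mod_cast h1r
      exact Int.abs_lt_one_iff.mp h2
    have han1 : a (n+1) = 0 := by
      have h1r : |(a (n+1) : ℝ)| < 1 := by
        calc |(a (n+1) : ℝ)| ≤ 1.4/100 * t := hB'
        _ ≤ 1.4/100 * 14 := by linarith
        _ < 1 := by norm_num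
      have h2 : |a (n+1)| < (1:ℤ) := by
        rw [← Int.cast_abs] at h1r
        exact_mod_cast h1r
      exact Int.abs_lt_one_iff.mp h2
    rcases lt_trichotomy (a (n+2)) 0 with hneg | hzero | hpos
    · have hb := backpos (fun i => -(a i)) (by
        intro i hi
        have := ha i hi
        omega) n hn (by omega) (by omega) (by omega)
      omega
    · obtain ⟨k, rfl⟩ : ∃ k, n = 1 + k := ⟨n - 1, by omega⟩
      have hz := hinv (1+k)
      rw [hwpow k, hFpow k] at hz
      rw [show (1+k)+1 = 1+k+1 from rfl] at hz
      rw [han, han1, hzero] at hz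
      push_cast at hz
      have hbp : β^k * φ^k = 1 := by
        rw [← mul_pow, mul_comm β φ, hβφ, one_pow]
      have hwf : w 1 * F 1 = 0 := by
        have : β ^ k * w 1 * (φ ^ k * F 1) = (β^k * φ^k) * (w 1 * F 1) := by ring
        rw [this, hbp, one_mul] at hz
        linarith [hz]
      rw [hwf] at hG1
      simp at hG1
      linarith
    · have hb := backpos a ha n hn han han1 hpos
      omega
  · -- large case
    obtain ⟨k, rfl⟩ : ∃ k, n = 1 + k := ⟨n - 1, by omega⟩
    have hk : 7 ≤ k := by omega
    have hβpos : (0:ℝ) < β := by linarith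
    have hvn : |v (1+k)| ≤ (2/100) * t := by
      rw [hv]
      have s1 : |(a (1+k+1):ℝ) - β * (a (1+k):ℝ)| ≤ |(a (1+k+1):ℝ)| + |β * (a (1+k):ℝ)| := abs_sub _ _
      rw [abs_mul, abs_of_pos hβpos] at s1
      have s2 : β * |(a (1+k):ℝ)| ≤ β * (1/100 * t) := mul_le_mul_of_nonneg_left hA (le_of_lt hβpos)
      have s3 : β * (1/100 * t) ≤ 0.56 * (1/100 * t) := by
        apply mul_le_mul_of_nonneg_right (le_of_lt hβ2)
        positivity
      linarith [hB']
    have hvsq : (v (1+k))^2 ≤ (2/100)^2 * t^2 := by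
      have h := pow_le_pow_left₀ (abs_nonneg (v (1+k))) hvn 2
      rw [sq_abs] at h
      calc (v (1+k))^2 ≤ ((2/100)*t)^2 := h
      _ = (2/100)^2 * t^2 := by ring
    have hvn1e : v (1+k+1) = w (1+k) - (1+2*β) * (a (1+k+1):ℝ) - φ * (a (1+k):ℝ) := by
      rw [hv, hw, show 1+k+1+1 = 1+k+2 from rfl]
      ring
    have hvn1 : |v (1+k+1)| ≤ |w (1+k)| + (5/100) * t := by
      rw [hvn1e]
      have s1 : |w (1+k) - (1+2*β) * (a (1+k+1):ℝ) - φ * (a (1+k):ℝ)|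
          ≤ |w (1+k) - (1+2*β) * (a (1+k+1):ℝ)| + |φ * (a (1+k):ℝ)| := abs_sub _ _
      have s2 : |w (1+k) - (1+2*β) * (a (1+k+1):ℝ)| ≤ |w (1+k)| + |(1+2*β) * (a (1+k+1):ℝ)| := abs_sub _ _
      rw [abs_mul, abs_of_pos hφpos] at s1
      rw [abs_mul, abs_of_pos (by linarith : (0:ℝ) < 1+2*β)] at s2
      have s3 : (1+2*β) * |(a (1+k+1):ℝ)| ≤ (1+2*β) * (1.4/100 * t) :=
        mul_le_mul_of_nonneg_left hB' (by linarith)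
      have s4 : (1+2*β) * (1.4/100 * t) ≤ 2.12 * (1.4/100 * t) := by
        apply mul_le_mul_of_nonneg_right (by linarith)
        positivity
      have s5 : φ * |(a (1+k):ℝ)| ≤ φ * (1/100 * t) := mul_le_mul_of_nonneg_left hA (le_of_lt hφpos)
      have s6 : φ * (1/100 * t) ≤ 1.9 * (1/100 * t) := by
        apply mul_le_mul_of_nonneg_right (le_of_lt hφ2)
        positivity
      linarith
    have hvn1sq : (v (1+k+1))^2 ≤ 2 * (w (1+k))^2 + 2 * ((5/100)^2 * t^2) := by
      have h := pow_le_pow_left₀ (abs_nonneg (v (1+k+1))) hvn1 2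
      rw [sq_abs] at h
      have h2 : (|w (1+k)| + (5/100)*t)^2 ≤ 2 * |w (1+k)|^2 + 2 * ((5/100)*t)^2 := by
        nlinarith [sq_nonneg (|w (1+k)| - (5/100)*t)]
      rw [sq_abs] at h2
      calc (v (1+k+1))^2 ≤ (|w (1+k)| + (5/100)*t)^2 := h
      _ ≤ 2 * (w (1+k))^2 + 2 * ((5/100)*t)^2 := h2
      _ = 2 * (w (1+k))^2 + 2 * ((5/100)^2 * t^2) := by ring
    have hwsq : (w (1+k))^2 ≤ 20 * ((β^k)^2 * F 1) := by
      rw [hwpow k]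
      have e : (β^k * w 1)^2 = (β^k)^2 * (w 1)^2 := by ring
      rw [e]
      have h := mul_le_mul_of_nonneg_left hw1sq (sq_nonneg (β^k))
      linarith [h]
    have hβk : 200 * (β^k)^2 ≤ φ^k := by
      have h1' : β^k * φ^k = 1 := by rw [← mul_pow, mul_comm β φ, hβφ, one_pow]
      have h2' : (200:ℝ) ≤ φ^(3*k) := by
        calc (200:ℝ) ≤ 6^(7:ℕ) := by norm_num
        _ ≤ (6:ℝ)^k := pow_le_pow_right₀ (by norm_num) hk
        _ ≤ (φ^3)^k := pow_le_pow_left₀ (by norm_num) (by nlinarith) k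
        _ = φ^(3*k) := by rw [← pow_mul]
      have hc2 : (0:ℝ) < (φ^k)^2 := pow_pos (pow_pos hφpos k) 2
      apply (mul_le_mul_iff_of_pos_right hc2).mp
      calc 200*(β^k)^2*(φ^k)^2 = 200*((β^k)*(φ^k))^2 := by ring
      _ = 200 := by rw [h1']; norm_num
      _ ≤ φ^(3*k) := h2'
      _ = φ^k * (φ^k)^2 := by rw [show 3*k = k + k*2 from by ring, pow_add, pow_mul φ k 2]
    have hFpos1 : (0:ℝ) < φ^k := pow_pos hφpos k
    have hFk := hFpow k
    have hFh := hFhigh (1+k)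
    have ht2' : t^2 = φ * φ^k := by rw [ht2, pow_add, pow_one]
    have P1 : 200*(β^k)^2 * F 1 ≤ φ^k * F 1 := mul_le_mul_of_nonneg_right hβk hF1nn
    have P2 : φ * φ^k ≤ 1.9 * φ^k := mul_le_mul_of_nonneg_right (le_of_lt hφ2) (le_of_lt hFpos1)
    have P3 : (1/3) * φ^k ≤ F 1 * φ^k := mul_le_mul_of_nonneg_right hF1pos (le_of_lt hFpos1)
    have hfin : φ^k * F 1 ≤ 5/2*((2/100)^2*t^2) + 5*(w (1+k))^2 + 5*((5/100)^2*t^2) := by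
      rw [← hFk]
      rw [show (1+k)+1 = 1+k+1 from rfl] at hFh
      linarith [hFh, hvsq, hvn1sq]
    linarith [hfin, hwsq, P1, P2, P3, hFpos1, ht2']
end

section
/- Let φ be the real root of x³ = x² + x + 1. For n ≥ 3, if ⟨a_i⟩_{i=1}^n is a non-zero integer tribonacci sequence (a_i = a_{i-1} + a_{i-2} + a_{i-3} for 4 ≤ i ≤ n) terminating at a_n = 0, then |a_1| > 0.01·φ^{n/2} or |a_2| > 0.01·φ^{(n-1)/2}. -/
private lemma aux_zero (n : ℕ) (a : ℕ → ℤ)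
    (hrec : ∀ i, 4 ≤ i → i ≤ n → a i = a (i - 1) + a (i - 2) + a (i - 3))
    (hn : 3 ≤ n) (h2 : a (n-2) = 0) (h1 : a (n-1) = 0) (h0 : a n = 0) :
    ∀ i, 1 ≤ i → i ≤ n → a i = 0 := by
  have key : ∀ d j, 1 ≤ j → j ≤ n → n - j = d → a j = 0 := by
    intro d
    induction d using Nat.strong_induction_on with
    | _ d ih =>
      intro j hj1 hjn hd
      by_cases hc : j + 3 ≤ n
      · have e1 := ih (n - (j+1)) (by omega) (j+1) (by omega) (by omega) rfl
        have e2 := ih (n - (j+2)) (by omega) (j+2) (by omega) (by omega) rfl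
        have e3 := ih (n - (j+3)) (by omega) (j+3) (by omega) (by omega) rfl
        have hr := hrec (j+3) (by omega) hc
        rw [show j+3-1 = j+2 from by omega, show j+3-2 = j+1 from by omega,
            show j+3-3 = j from by omega] at hr
        linarith [hr, e1, e2, e3]
      · have : j = n - 2 ∨ j = n - 1 ∨ j = n := by omega
        rcases this with h | h | h <;> subst h <;> assumption
  intro i hi1 hin
  exact key (n - i) i hi1 hin rfl

private lemma phi_bounds (φ : ℝ) (hφ : φ ^ 3 = φ ^ 2 + φ + 1) : 1.83 < φ ∧ φ < 1.84 := by
  have h0 : 0 < φ := by nlinarith [sq_nonneg φ, sq_nonneg (φ+1), sq_nonneg (φ-1)]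
  constructor
  · nlinarith [sq_nonneg (φ - 1.83), sq_nonneg (φ + 0.45), sq_nonneg (φ - 1)]
  · nlinarith [sq_nonneg (φ - 1.84), sq_nonneg (φ + 0.45), sq_nonneg (φ - 1)]

private lemma form_lb (φ x y : ℝ) (h1 : 1.83 ≤ φ) (h2 : φ ≤ 1.84) :
    0.51*(x^2+y^2) ≤ x^2 + φ*(φ-1)*x*y + φ*y^2 := by
  have key : 0 ≤ (1-0.28*φ)*x^2 + (φ*(φ-1))*x*y + (0.72*φ)*y^2 := by
    have hd : 0.16 ≤ 4*(1-0.28*φ)*(0.72*φ) - (φ*(φ-1))^2 := by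
      nlinarith [sq_nonneg (φ-1.835), mul_nonneg (sub_nonneg.2 h1) (sub_nonneg.2 h2)]
    nlinarith [sq_nonneg (2*(1-0.28*φ)*x + (φ*(φ-1))*y),
      mul_nonneg (le_trans (by norm_num) hd) (sq_nonneg y)]
  nlinarith [key, mul_nonneg (by linarith : (0:ℝ) ≤ 0.28*φ - 0.51)
    (by positivity : (0:ℝ) ≤ x^2 + y^2)]

private lemma form_ub (φ x y : ℝ) (h1 : 1.83 ≤ φ) (h2 : φ ≤ 1.84) :
    x^2 + φ*(φ-1)*x*y + φ*y^2 ≤ 2.32*(x^2+y^2) := by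
  have key : 0 ≤ (1.26*φ-1)*x^2 - (φ*(φ-1))*x*y + (0.26*φ)*y^2 := by
    have hd : 0.1 ≤ 4*(1.26*φ-1)*(0.26*φ) - (φ*(φ-1))^2 := by
      nlinarith [sq_nonneg (φ-1.835), mul_nonneg (sub_nonneg.2 h1) (sub_nonneg.2 h2)]
    nlinarith [sq_nonneg (2*(1.26*φ-1)*x - (φ*(φ-1))*y),
      mul_nonneg (le_trans (by norm_num) hd) (sq_nonneg y)]
  nlinarith [key, mul_nonneg (by linarith : (0:ℝ) ≤ 2.32 - 1.26*φ)
    (by positivity : (0:ℝ) ≤ x^2 + y^2)]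

private lemma rpow_half_sq (φ : ℝ) (h0 : 0 < φ) (c : ℝ) : (φ ^ (c/2))^2 = φ ^ c := by
  calc (φ ^ (c/2))^2 = (φ ^ (c/2)) ^ ((2:ℕ):ℝ) := by rw [Real.rpow_natCast]
    _ = φ ^ ((c/2) * 2) := by rw [← Real.rpow_mul h0.le]; norm_num
    _ = φ ^ c := by norm_num

set_option maxHeartbeats 1000000 in
theorem stmt_14 (φ : ℝ) (hφ : φ ^ 3 = φ ^ 2 + φ + 1) (n : ℕ) (hn : 3 ≤ n)
    (a : ℕ → ℤ)
    (hrec : ∀ i, 4 ≤ i → i ≤ n → a i = a (i - 1) + a (i - 2) + a (i - 3))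
    (hnz : ∃ i, 1 ≤ i ∧ i ≤ n ∧ a i ≠ 0) (hterm : a n = 0) :
    |(a 1 : ℝ)| > 0.01 * φ ^ ((n : ℝ) / 2) ∨
    |(a 2 : ℝ)| > 0.01 * φ ^ (((n : ℝ) - 1) / 2) := by
  obtain ⟨hl, hu⟩ := phi_bounds φ hφ
  have h0 : (0:ℝ) < φ := by linarith
  have h1 : (1:ℝ) < φ := by linarith
  set t : ℝ := φ ^ ((n : ℝ) / 2) with htdef
  set t' : ℝ := φ ^ (((n : ℝ) - 1) / 2) with ht'def
  have ht2 : t^2 = φ ^ n := by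
    rw [htdef, rpow_half_sq φ h0, Real.rpow_natCast]
  have ht'2 : t'^2 = φ ^ (n-1) := by
    rw [ht'def, rpow_half_sq φ h0]
    rw [show ((n:ℝ) - 1) = ((n-1 : ℕ) : ℝ) from by push_cast [Nat.cast_sub (by omega : 1 ≤ n)]; ring]
    exact Real.rpow_natCast _ _
  have htpos : 0 < t := Real.rpow_pos_of_pos h0 _
  have ht'pos : 0 < t' := Real.rpow_pos_of_pos h0 _
  -- small cases n = 3, 4
  by_cases hn5 : n < 5
  · -- trivial case
    have h12 : a 1 ≠ 0 ∨ a 2 ≠ 0 := by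
      by_contra hcon
      push_neg at hcon
      obtain ⟨ha1, ha2⟩ := hcon
      obtain ⟨i, hi1, hin, hine⟩ := hnz
      interval_cases n
      · -- n = 3
        interval_cases i <;> simp_all
      · -- n = 4
        have hr := hrec 4 (by norm_num) (by norm_num)
        norm_num at hr
        have ha3 : a 3 = 0 := by omega
        interval_cases i <;> simp_all
    have hpow : φ ^ n ≤ (1.84:ℝ)^4 := by
      calc φ ^ n ≤ φ ^ 4 := pow_le_pow_right₀ h1.le (by omega)
        _ ≤ (1.84:ℝ)^4 := pow_le_pow_left₀ h0.le hu.le 4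
    rcases h12 with h | h
    · left
      have habs : (1:ℝ) ≤ |(a 1 : ℝ)| := by
        rw [← Int.cast_abs]; exact_mod_cast Int.one_le_abs h
      have : (0.01 * t)^2 < |(a 1 : ℝ)|^2 := by
        have : (0.01 * t)^2 = 0.0001 * φ ^ n := by rw [mul_pow, ht2]; norm_num
        nlinarith [habs]
      have := lt_of_pow_lt_pow_left₀ 2 (abs_nonneg ((a 1 : ℝ))) this
      linarith
    · right
      have habs : (1:ℝ) ≤ |(a 2 : ℝ)| := by
        rw [← Int.cast_abs]; exact_mod_cast Int.one_le_abs h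
      have hp' : φ ^ (n-1) ≤ (1.84:ℝ)^4 := by
        calc φ ^ (n-1) ≤ φ ^ 4 := pow_le_pow_right₀ h1.le (by omega)
          _ ≤ (1.84:ℝ)^4 := pow_le_pow_left₀ h0.le hu.le 4
      have : (0.01 * t')^2 < |(a 2 : ℝ)|^2 := by
        have : (0.01 * t')^2 = 0.0001 * φ ^ (n-1) := by rw [mul_pow, ht'2]; norm_num
        nlinarith [habs]
      have := lt_of_pow_lt_pow_left₀ 2 (abs_nonneg ((a 2 : ℝ))) this
      linarith
  · -- main case n ≥ 5
    obtain ⟨k, rfl⟩ : ∃ k, n = k + 5 := ⟨n - 5, by omega⟩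
    rw [show k+5-1 = k+4 from by omega] at ht'2
    have hden : (0:ℝ) < φ^3 + 2*φ^2 + 3*φ := by positivity
    obtain ⟨A, hAD⟩ : ∃ A : ℝ, A * (φ^3 + 2*φ^2 + 3*φ)
        = φ*(a 3 : ℝ) - φ*(1-φ)*(a 2 : ℝ) + (a 1 : ℝ) :=
      ⟨_, div_mul_cancel₀ _ (ne_of_gt hden)⟩
    obtain ⟨s, hsdef⟩ : ∃ s : ℕ → ℝ, ∀ i, s i = (a i : ℝ) - A * φ^i :=
      ⟨_, fun i => rfl⟩
    have hbase : φ * s 3 = φ*(1-φ)* s 2 - s 1 := by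
      rw [hsdef 1, hsdef 2, hsdef 3]
      linear_combination (-1) * hAD - 2*A*φ*hφ
    have hs : ∀ i, 1 ≤ i → i + 2 ≤ k + 5 → φ * s (i+2) = φ*(1-φ)*s (i+1) - s i := by
      intro i
      induction i with
      | zero => omega
      | succ j ih =>
        intro _ hin
        rcases Nat.eq_zero_or_pos j with hj0 | hj1
        · subst hj0; exact hbase
        · have IH := ih (by omega) (by omega)
          have hr := hrec (j+3) (by omega) (by omega)
          rw [show j+3-1 = j+2 from by omega, show j+3-2 = j+1 from by omega,
              show j+3-3 = j from by omega] at hr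
          have hcast : ((a (j+3) : ℝ)) = (a (j+2) : ℝ) + (a (j+1) : ℝ) + (a j : ℝ) := by
            exact_mod_cast congrArg (fun z : ℤ => (z:ℝ)) hr
          have hsum : s (j+3) = s (j+2) + s (j+1) + s j := by
            rw [hsdef j, hsdef (j+1), hsdef (j+2), hsdef (j+3)]
            linear_combination hcast - A*φ^j*hφ
          linear_combination φ*hsum + φ*IH - s (j+1)*hφ
    obtain ⟨Pq, hPdef⟩ : ∃ Pq : ℕ → ℝ,
        ∀ i, Pq i = (s i)^2 + φ*(φ-1)*(s i)*(s (i+1)) + φ*(s (i+1))^2 :=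
      ⟨_, fun i => rfl⟩
    have hPstep : ∀ i, 1 ≤ i → i + 2 ≤ k + 5 → φ * Pq (i+1) = Pq i := by
      intro i hi1 hi2
      have h := hs i hi1 hi2
      rw [hPdef i, hPdef (i+1)]
      have e : i+1+1 = i+2 := by omega
      rw [e]
      linear_combination (φ * s (i+2) - s i) * h
    have hPpow : ∀ j, j + 2 ≤ k + 5 → φ^j * Pq (1+j) = Pq 1 := by
      intro j
      induction j with
      | zero => intro _; simp
      | succ m ih =>
        intro h
        have h2 := hPstep (1+m) (by omega) (by omega)
        have ihm := ih (by omega)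
        calc φ^(m+1) * Pq (1+(m+1)) = φ^m * (φ * Pq (1+m+1)) := by ring_nf
          _ = φ^m * Pq (1+m) := by rw [h2]
          _ = Pq 1 := ihm
    have hS0 : (0:ℝ) ≤ max |s 1| |s 2| := le_trans (abs_nonneg _) (le_max_left _ _)
    set S : ℝ := max |s 1| |s 2| with hSdef
    have hS1 : |s 1| ≤ S := le_max_left _ _
    have hS2 : |s 2| ≤ S := le_max_right _ _
    have hsq1 : (s 1)^2 ≤ S^2 := by rw [← sq_abs]; exact pow_le_pow_left₀ (abs_nonneg _) hS1 2
    have hsq2 : (s 2)^2 ≤ S^2 := by rw [← sq_abs]; exact pow_le_pow_left₀ (abs_nonneg _) hS2 2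
    have hQ1up : Pq 1 ≤ 4.64 * S^2 := by
      have hub := form_ub φ (s 1) (s 2) hl.le hu.le
      have e := hPdef 1
      norm_num at e
      rw [e]
      linarith [hub, hsq1, hsq2]
    have hsn : s (k+5) = -(A * φ^(k+5)) := by
      rw [hsdef (k+5), hterm]; push_cast; ring
    have hbig : 0.6 ≤ |s (k+3)| ∨ 0.6 ≤ |s (k+4)| ∨ 0.6 ≤ |s (k+5)| := by
      by_contra hcon
      push_neg at hcon
      obtain ⟨c1, c2, c3⟩ := hcon
      have hAn : |A| * φ^(k+5) < 0.6 := by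
        have he : |s (k+5)| = |A| * φ^(k+5) := by
          rw [hsn, abs_neg, abs_mul, abs_of_pos (pow_pos h0 _)]
        rw [he] at c3; exact c3
      have hpow4 : |A| * φ^(k+4) < 0.33 := by
        have he : φ^(k+5) = φ^(k+4) * φ := by ring
        rw [he] at hAn
        have hm := mul_le_mul_of_nonneg_left hl.le
          (mul_nonneg (abs_nonneg A) (pow_pos h0 (k+4)).le)
        linarith
      have hpow3 : |A| * φ^(k+3) < 0.33 := by
        have hm : φ^(k+3) ≤ φ^(k+4) := pow_le_pow_right₀ h1.le (by omega)
        have := mul_le_mul_of_nonneg_left hm (abs_nonneg A)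
        linarith
      have habs4 : |(a (k+4) : ℝ)| < 1 := by
        have hd : (a (k+4) : ℝ) = s (k+4) + A * φ^(k+4) := by rw [hsdef (k+4)]; ring
        rw [hd]
        calc |s (k+4) + A * φ^(k+4)| ≤ |s (k+4)| + |A * φ^(k+4)| := abs_add_le _ _
          _ = |s (k+4)| + |A| * φ^(k+4) := by rw [abs_mul, abs_of_pos (pow_pos h0 _)]
          _ < 1 := by linarith
      have ha4 : a (k+4) = 0 := by
        rw [← Int.cast_abs] at habs4
        have : |a (k+4)| < 1 := by exact_mod_cast habs4
        exact Int.abs_lt_one_iff.mp this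
      have habs3 : |(a (k+3) : ℝ)| < 1 := by
        have hd : (a (k+3) : ℝ) = s (k+3) + A * φ^(k+3) := by rw [hsdef (k+3)]; ring
        rw [hd]
        calc |s (k+3) + A * φ^(k+3)| ≤ |s (k+3)| + |A * φ^(k+3)| := abs_add_le _ _
          _ = |s (k+3)| + |A| * φ^(k+3) := by rw [abs_mul, abs_of_pos (pow_pos h0 _)]
          _ < 1 := by linarith
      have ha3 : a (k+3) = 0 := by
        rw [← Int.cast_abs] at habs3
        have : |a (k+3)| < 1 := by exact_mod_cast habs3
        exact Int.abs_lt_one_iff.mp this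
      obtain ⟨i, hi1, hin, hine⟩ := hnz
      exact hine (aux_zero (k+5) a hrec (by omega)
        (by rw [show k+5-2 = k+3 from by omega]; exact ha3)
        (by rw [show k+5-1 = k+4 from by omega]; exact ha4) hterm i hi1 hin)
    have hQ1low : 0.18 * φ^(k+2) ≤ Pq 1 := by
      rcases hbig with hb | hb | hb
      · have hsq : 0.36 ≤ (s (k+3))^2 := by
          have h2 := pow_le_pow_left₀ (by norm_num : (0:ℝ) ≤ 0.6) hb 2
          rw [sq_abs] at h2; norm_num at h2; linarith
        have hP3 : 0.18 ≤ Pq (k+3) := by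
          have hlb := form_lb φ (s (k+3)) (s (k+4)) hl.le hu.le
          rw [hPdef (k+3), show k+3+1 = k+4 from by omega]
          linarith [sq_nonneg (s (k+4))]
        have heq := hPpow (k+2) (by omega)
        rw [show 1+(k+2) = k+3 from by omega] at heq
        have := mul_le_mul_of_nonneg_left hP3 (pow_pos h0 (k+2)).le
        linarith
      · have hsq : 0.36 ≤ (s (k+4))^2 := by
          have h2 := pow_le_pow_left₀ (by norm_num : (0:ℝ) ≤ 0.6) hb 2
          rw [sq_abs] at h2; norm_num at h2; linarith
        have hP3 : 0.18 ≤ Pq (k+3) := by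
          have hlb := form_lb φ (s (k+3)) (s (k+4)) hl.le hu.le
          rw [hPdef (k+3), show k+3+1 = k+4 from by omega]
          linarith [sq_nonneg (s (k+3))]
        have heq := hPpow (k+2) (by omega)
        rw [show 1+(k+2) = k+3 from by omega] at heq
        have := mul_le_mul_of_nonneg_left hP3 (pow_pos h0 (k+2)).le
        linarith
      · have hsq : 0.36 ≤ (s (k+5))^2 := by
          have h2 := pow_le_pow_left₀ (by norm_num : (0:ℝ) ≤ 0.6) hb 2
          rw [sq_abs] at h2; norm_num at h2; linarith
        have hP4 : 0.18 ≤ Pq (k+4) := by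
          have hlb := form_lb φ (s (k+4)) (s (k+5)) hl.le hu.le
          rw [hPdef (k+4), show k+4+1 = k+5 from by omega]
          linarith [sq_nonneg (s (k+4))]
        have heq := hPpow (k+3) (by omega)
        rw [show 1+(k+3) = k+4 from by omega] at heq
        have hmono : φ^(k+2) ≤ φ^(k+3) := pow_le_pow_right₀ h1.le (by omega)
        have e1 := mul_le_mul_of_nonneg_left hP4 (pow_pos h0 (k+3)).le
        have e2 := mul_le_mul_of_nonneg_right hmono (by norm_num : (0:ℝ) ≤ 0.18)
        linarith
    have hS2low : 0.038 * φ^(k+2) ≤ S^2 := by linarith [pow_pos h0 (k+2)]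
    have hSpos : 0 < S := by
      have h' : 0 < S^2 := lt_of_lt_of_le (by positivity) hS2low
      rcases lt_or_eq_of_le hS0 with h | h
      · exact h
      · exfalso; rw [← h] at h'; norm_num at h'
    have htail : 0.51 * φ^(k+3) * (s (k+5))^2 ≤ 4.64 * S^2 := by
      have hP4lb : 0.51 * (s (k+5))^2 ≤ Pq (k+4) := by
        have hlb := form_lb φ (s (k+4)) (s (k+5)) hl.le hu.le
        rw [hPdef (k+4), show k+4+1 = k+5 from by omega]
        nlinarith [sq_nonneg (s (k+4))]
      have heq := hPpow (k+3) (by omega)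
      rw [show 1+(k+3) = k+4 from by omega] at heq
      have hmul := mul_le_mul_of_nonneg_left hP4lb (le_of_lt (pow_pos h0 (k+3)))
      linarith
    have hAval : (A*φ^2)^2 * φ^(3*k+9) = φ^(k+3) * (s (k+5))^2 := by
      have hsq : (A*φ^(k+5))^2 = (s (k+5))^2 := by rw [hsn]; ring_nf
      calc (A*φ^2)^2 * φ^(3*k+9) = (A*φ^(k+5))^2 * φ^(k+3) := by ring
        _ = (s (k+5))^2 * φ^(k+3) := by rw [hsq]
        _ = φ^(k+3) * (s (k+5))^2 := by ring
    have h230 : (230:ℝ) ≤ φ^(3*k+9) := by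
      calc (230:ℝ) ≤ 1.83^9 := by norm_num
        _ ≤ φ^9 := pow_le_pow_left₀ (by norm_num) hl.le 9
        _ ≤ φ^(3*k+9) := pow_le_pow_right₀ h1.le (by omega)
    have hAhalf : (A*φ^2)^2 ≤ (S/2)^2 := by
      have h1' : (A*φ^2)^2 * 230 ≤ (A*φ^2)^2 * φ^(3*k+9) :=
        mul_le_mul_of_nonneg_left h230 (sq_nonneg _)
      rw [hAval] at h1'
      linarith [sq_nonneg S]
    have hAabs : |A*φ^2| ≤ S/2 := by
      rw [← sq_abs (A*φ^2)] at hAhalf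
      exact (pow_le_pow_iff_left₀ (abs_nonneg _) (by linarith) (by norm_num)).mp hAhalf
    have hAabs1 : |A*φ| ≤ S/2 := by
      have hle : |A*φ| ≤ |A*φ^2| := by
        rw [abs_mul, abs_mul, abs_of_pos h0, abs_of_pos (pow_pos h0 2)]
        have hp : φ ≤ φ^2 := by nlinarith [h1, h0]
        exact mul_le_mul_of_nonneg_left hp (abs_nonneg A)
      linarith
    rcases le_total |s 1| |s 2| with hc | hc
    · right
      have hSeq : S = |s 2| := max_eq_right hc
      have hd : s 2 = (a 2 : ℝ) + (-(A * φ^2)) := by rw [hsdef 2]; ring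
      have htri : |s 2| ≤ |(a 2 : ℝ)| + |A*φ^2| := by
        rw [hd]
        calc |(a 2 : ℝ) + (-(A*φ^2))| ≤ |(a 2 : ℝ)| + |(-(A*φ^2))| := abs_add_le _ _
          _ = |(a 2 : ℝ)| + |A*φ^2| := by rw [abs_neg]
      have ha2 : S/2 ≤ |(a 2 : ℝ)| := by rw [hSeq] at hS1 hS2 hS2low hSpos ⊢; linarith
      have hfin : (0.01 * t')^2 < |(a 2 : ℝ)|^2 := by
        have he1 : (0.01*t')^2 = 0.0001 * (φ^(k+2) * φ^2) := by
          rw [mul_pow, ht'2]; ring_nf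
        have he2 : (S/2)^2 ≤ |(a 2 : ℝ)|^2 := pow_le_pow_left₀ (by linarith) ha2 2
        have hphi2 : φ^2 ≤ 3.3856 := by
          rw [pow_two]; have := mul_le_mul hu.le hu.le h0.le (by norm_num : (0:ℝ) ≤ 1.84)
          linarith
        have hmm := mul_le_mul_of_nonneg_left hphi2 (pow_pos h0 (k+2)).le
        linarith [pow_pos h0 (k+2)]
      have := lt_of_pow_lt_pow_left₀ 2 (abs_nonneg ((a 2 : ℝ))) hfin
      linarith
    · left
      have hSeq : S = |s 1| := max_eq_left hc
      have hd : s 1 = (a 1 : ℝ) + (-(A * φ)) := by rw [hsdef 1]; ring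
      have htri : |s 1| ≤ |(a 1 : ℝ)| + |A*φ| := by
        rw [hd]
        calc |(a 1 : ℝ) + (-(A*φ))| ≤ |(a 1 : ℝ)| + |(-(A*φ))| := abs_add_le _ _
          _ = |(a 1 : ℝ)| + |A*φ| := by rw [abs_neg]
      have ha1 : S/2 ≤ |(a 1 : ℝ)| := by rw [hSeq] at hS1 hS2 hS2low hSpos ⊢; linarith
      have hfin : (0.01 * t)^2 < |(a 1 : ℝ)|^2 := by
        have he1 : (0.01*t)^2 = 0.0001 * (φ^(k+2) * φ^3) := by
          rw [mul_pow, ht2]; ring_nf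
        have he2 : (S/2)^2 ≤ |(a 1 : ℝ)|^2 := pow_le_pow_left₀ (by linarith) ha1 2
        have hphi2 : φ^2 ≤ 3.3856 := by
          rw [pow_two]; have := mul_le_mul hu.le hu.le h0.le (by norm_num : (0:ℝ) ≤ 1.84)
          linarith
        have hphi3 : φ^3 ≤ 6.3 := by linarith [hφ]
        have hmm := mul_le_mul_of_nonneg_left hphi3 (pow_pos h0 (k+2)).le
        linarith [pow_pos h0 (k+2)]
      have := lt_of_pow_lt_pow_left₀ 2 (abs_nonneg ((a 1 : ℝ))) hfin
      linarith
end

section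
/- Let φ be the real root of x³ = x² + x + 1. For any positive integers k ≥ 4 and n with n > 0.2·φ^{3k/2}, there exists a positive tribonacci sequence of length k terminating at n. -/
set_option maxHeartbeats 4000000

private def triSeq (b c d : ℤ) : ℕ → ℤ
  | 0 => b
  | 1 => c
  | 2 => d
  | m+3 => triSeq b c d m - triSeq b c d (m+1) - triSeq b c d (m+2)


private def twoSeq (p q x0 x1 : ℝ) : ℕ → ℝ
  | 0 => x0
  | 1 => x1
  | m+2 => p * twoSeq p q x0 x1 (m+1) - q * twoSeq p q x0 x1 m


private lemma abs_le_of_sq_le (x t : ℝ) (h : x^2 ≤ 0.2025 * t^2) (ht : 0 < t) :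
    |x| ≤ 0.45 * t := by
  nlinarith [sq_abs x, abs_nonneg x]

private lemma key_bound (φ ψ : ℝ) (hφ : φ ^ 3 = φ ^ 2 + φ + 1)
    (hlo : 1.8392 ≤ φ) (hhi : φ ≤ 1.8393)
    (hψ2 : ψ ^ 2 = φ) (hψlo : 1.356 ≤ ψ) (hψhi : ψ ≤ 1.357)
    (g : ℕ → ℝ) (h0 : g 0 = 0) (h1 : |g 1| ≤ 1/2) (h2 : |g 2| ≤ 1/2)
    (hrec : ∀ m, g (m+3) = g m - g (m+1) - g (m+2)) :
    ∀ m, |g m| ≤ 0.49 * ψ ^ m := by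
  have hφ0 : (0:ℝ) < φ := by linarith
  have hψ0 : (0:ℝ) < ψ := by linarith
  have hE0 : (0:ℝ) < φ^2 + 2*φ + 3 := by positivity
  set A : ℝ := (g 2 - (φ - φ^2) * g 1) * φ^2 / (φ^2 + 2*φ + 3) with hAdef
  have hAE : A * (φ^2 + 2*φ + 3) = (g 2 - (φ - φ^2) * g 1) * φ^2 := by
    rw [hAdef]; field_simp
  set α : ℝ := φ⁻¹ with hαdef
  have hαφ : φ * α = 1 := mul_inv_cancel₀ (ne_of_gt hφ0)
  set s : ℕ → ℝ := twoSeq (φ - φ^2) φ (-A) (g 1 - A*α) with hsdef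
  have hs0 : s 0 = -A := by simp [hsdef, twoSeq]
  have hs1 : s 1 = g 1 - A*α := by simp [hsdef, twoSeq]
  have hsrec : ∀ m, s (m+2) = (φ - φ^2) * s (m+1) - φ * s m := by
    intro m; simp [hsdef, twoSeq]
  -- bounds on g1 g2
  obtain ⟨hg1l, hg1u⟩ := abs_le.mp h1
  obtain ⟨hg2l, hg2u⟩ := abs_le.mp h2
  have hg1sq : (g 1)^2 ≤ 1/4 := by nlinarith
  have hg2sq : (g 2)^2 ≤ 1/4 := by nlinarith
  have hg12 : g 1 * g 2 ≤ 1/4 := by nlinarith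
  -- |A| ≤ 0.43
  have hA43 : |A| ≤ 0.43 := by
    rw [abs_le]; constructor
    · nlinarith [hAE, hE0, mul_nonneg (by linarith : (0:ℝ) ≤ g 1 + 1/2) (by nlinarith : (0:ℝ) ≤ (φ^2 - φ)*φ^2), mul_nonneg (by linarith : (0:ℝ) ≤ g 2 + 1/2) (by nlinarith : (0:ℝ) ≤ φ^2)]
    · nlinarith [hAE, hE0, mul_nonneg (by linarith : (0:ℝ) ≤ 1/2 - g 1) (by nlinarith : (0:ℝ) ≤ (φ^2 - φ)*φ^2), mul_nonneg (by linarith : (0:ℝ) ≤ 1/2 - g 2) (by nlinarith : (0:ℝ) ≤ φ^2)]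
  -- decomposition  φ^m (g m - s m) = A
  have hdec : ∀ m, φ^m * (g m - s m) = A ∧ φ^(m+1) * (g (m+1) - s (m+1)) = A ∧ φ^(m+2) * (g (m+2) - s (m+2)) = A := by
    intro m
    induction m with
    | zero =>
      refine ⟨?_, ?_, ?_⟩
      · rw [h0, hs0]; ring
      · rw [hs1]; ring_nf; linear_combination A * hαφ
      · rw [hsrec 0, hs0, hs1]
        linear_combination ((φ - φ^2)*A*φ)*hαφ - hAE + (-2*A)*hφ
    | succ m ih =>
      obtain ⟨ih0, ih1, ih2⟩ := ih
      refine ⟨ih1, ih2, ?_⟩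
      have hs3 : s (m+3) = s m - s (m+1) - s (m+2) := by
        have e3 : s (m+3) = (φ - φ^2) * s (m+2) - φ * s (m+1) := hsrec (m+1)
        rw [e3, hsrec m]
        linear_combination (s (m+1) * (φ - 1) + s m) * hφ
      have hr : g (m+3) = g m - g (m+1) - g (m+2) := hrec m
      rw [hr, hs3]
      linear_combination φ^3 * ih0 - φ^2 * ih1 - φ * ih2 + A * hφ
  -- quadratic Lyapunov function
  set Q : ℕ → ℝ := fun m => (s (m+1))^2 - (φ - φ^2) * s m * s (m+1) + φ * (s m)^2 with hQdef
  have hQstep : ∀ m, Q (m+1) = φ * Q m := by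
    intro m
    simp only [hQdef]
    rw [hsrec m]; ring
  have hQpow : ∀ m, Q m = φ^m * Q 0 := by
    intro m
    induction m with
    | zero => simp
    | succ m ih => rw [hQstep m, ih]; ring
  -- Q 0 ≤ 1/4
  have hQ0 : Q 0 ≤ 1/4 := by
    have e1 : (g 1 - A*α)*(φ^2 + 2*φ + 3) = g 1*(φ^2 + 2*φ + 3) - (g 2 - (φ - φ^2) * g 1)*φ := by
      linear_combination (-α)*hAE - ((g 2 - (φ - φ^2) * g 1)*φ)*hαφ
    have expand : Q 0 * (φ^2 + 2*φ + 3)^2 =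
        ((g 1 - A*α)*(φ^2 + 2*φ + 3))^2
        + (φ - φ^2)*(A*(φ^2 + 2*φ + 3))*((g 1 - A*α)*(φ^2 + 2*φ + 3))
        + φ*(A*(φ^2 + 2*φ + 3))^2 := by
      simp only [hQdef]
      rw [hs0, hs1]; ring
    have hQE : Q 0 * (φ^2 + 2*φ + 3)^2 =
        ((φ^2+1)*(g 1)^2 + (φ^2-φ)*(g 1)*(g 2) + φ^2*(g 2)^2) * (φ^2 + 2*φ + 3) := by
      rw [expand, e1, hAE]
      linear_combination ((g 1)^2*(2*φ^6 - 4*φ^5 + 2*φ^4 - 2*φ^2 - 4*φ - 6)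
        + (g 1)*(g 2)*(4*φ^4 - 3*φ^3 + 2*φ^2 + 3*φ) + (g 2)^2*(2*φ^2)) * hφ
    have hT4 : (φ^2+1)*(g 1)^2 + (φ^2-φ)*(g 1)*(g 2) + φ^2*(g 2)^2 ≤ (3*φ^2 - φ + 1)/4 := by
      nlinarith [mul_nonneg (by nlinarith : (0:ℝ) ≤ φ^2+1) (by linarith : (0:ℝ) ≤ 1/4 - (g 1)^2),
        mul_nonneg (by nlinarith : (0:ℝ) ≤ φ^2-φ) (by linarith : (0:ℝ) ≤ 1/4 - g 1 * g 2),
        mul_nonneg (by nlinarith : (0:ℝ) ≤ φ^2) (by linarith : (0:ℝ) ≤ 1/4 - (g 2)^2)]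
    have hTE : (3*φ^2 - φ + 1) ≤ φ^2 + 2*φ + 3 := by
      nlinarith [mul_pos (by linarith : (0:ℝ) < 2*φ+1) (by linarith : (0:ℝ) < 2 - φ)]
    have hchain : Q 0 * (φ^2 + 2*φ + 3)^2 ≤ ((φ^2 + 2*φ + 3)/4) * (φ^2 + 2*φ + 3) := by
      rw [hQE]
      apply mul_le_mul_of_nonneg_right _ hE0.le
      linarith
    nlinarith [mul_pos hE0 hE0, hchain]
  -- bound on s
  have hsb : ∀ m, |s m| ≤ 0.45 * ψ^m := by
    intro m
    have hq1 : (s m)^2 * (φ - (φ - φ^2)^2/4) ≤ Q m := by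
      have : Q m - (s m)^2 * (φ - (φ - φ^2)^2/4) = (s (m+1) - (φ - φ^2)*(s m)/2)^2 := by
        simp only [hQdef]; ring
      nlinarith [sq_nonneg (s (m+1) - (φ - φ^2)*(s m)/2)]
    have hgap : (1.2435:ℝ) ≤ φ - (φ - φ^2)^2/4 := by nlinarith
    have hφm : (0:ℝ) < φ^m := pow_pos hφ0 m
    have hpow : (ψ^m)^2 = φ^m := by
      rw [← hψ2]; ring
    have hsq : (s m)^2 ≤ 0.2025 * (ψ^m)^2 := by
      rw [hpow]
      have h5 : Q m ≤ φ^m * (1/4) := by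
        rw [hQpow m]
        nlinarith [hφm]
      nlinarith [sq_nonneg (s m)]
    exact abs_le_of_sq_le (s m) (ψ^m) hsq (pow_pos hψ0 m)
  -- final bound
  intro m
  rcases m with _ | _ | _ | j
  · rw [h0]; simp; norm_num
  · rw [pow_one]; nlinarith
  · have e2 : (0.49:ℝ) * ψ^2 = 0.49 * φ := by rw [hψ2]
    show |g 2| ≤ 0.49 * ψ^2
    rw [e2]; nlinarith
  · show |g (j+3)| ≤ 0.49 * ψ^(j+3)
    set m := j + 3 with hm
    have hd : φ^m * (g m - s m) = A := (hdec m).1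
    have hφm : (0:ℝ) < φ^m := pow_pos hφ0 m
    have hgm : g m = s m + A / φ^m := by
      field_simp
      linear_combination hd
    have h63 : (6.22:ℝ) ≤ φ^3 := by
      have := pow_le_pow_left₀ (by norm_num : (0:ℝ) ≤ 1.8392) hlo 3
      norm_num at this; linarith
    have hφ3m : φ^3 ≤ φ^m := by
      apply pow_le_pow_right₀ (by linarith)
      omega
    have hAm : |A / φ^m| ≤ 0.43/6.22 := by
      rw [abs_div, abs_of_pos hφm]
      apply div_le_div₀ (by norm_num) hA43 (by linarith) (by linarith)
    have hψ3m : ψ^3 ≤ ψ^m := by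
      apply pow_le_pow_right₀ (by linarith)
      omega
    have hψ33 : (2.49:ℝ) ≤ ψ^3 := by
      have := pow_le_pow_left₀ (by norm_num : (0:ℝ) ≤ 1.356) hψlo 3
      norm_num at this; linarith
    calc |g m| = |s m + A / φ^m| := by rw [hgm]
      _ ≤ |s m| + |A / φ^m| := abs_add_le _ _
      _ ≤ 0.45 * ψ^m + 0.43/6.22 := by linarith [hsb m]
      _ ≤ 0.45 * ψ^m + 0.04 * ψ^m := by linarith
      _ = 0.49 * ψ^m := by ring

theorem stmt_16 (φ : ℝ) (hφ : φ ^ 3 = φ ^ 2 + φ + 1) (k : ℕ) (hk : 4 ≤ k)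
    (n : ℤ) (hn : 0 < n) (hbig : (n : ℝ) > 0.2 * φ ^ ((3 * (k : ℝ)) / 2)) :
    ∃ a : ℕ → ℤ,
      (∀ i, 4 ≤ i → i ≤ k → a i = a (i - 1) + a (i - 2) + a (i - 3)) ∧
      0 < a 1 ∧ 0 < a 2 ∧ 0 < a 3 ∧ a k = n := by
  have hlo : (1.8392:ℝ) ≤ φ := by
    nlinarith [hφ, sq_nonneg (φ + 0.4196), sq_nonneg φ, sq_nonneg (φ+1), sq_nonneg (φ-1.8392)]
  have hhi : φ ≤ 1.8393 := by
    nlinarith [hφ, sq_nonneg (φ + 0.41965), sq_nonneg φ, sq_nonneg (φ+1), sq_nonneg (φ-1.8393)]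
  have hφ0 : (0:ℝ) < φ := by linarith
  set ψ : ℝ := Real.sqrt φ with hψdef
  have hψ2 : ψ^2 = φ := Real.sq_sqrt hφ0.le
  have hψ0 : (0:ℝ) < ψ := Real.sqrt_pos.mpr hφ0
  have hψlo : (1.356:ℝ) ≤ ψ := by nlinarith
  have hψhi : ψ ≤ 1.357 := by nlinarith
  have hrw : φ ^ ((3 * (k:ℝ)) / 2) = ψ ^ (3*k) := by
    rw [hψdef, Real.sqrt_eq_rpow]
    rw [← Real.rpow_natCast (φ ^ ((1:ℝ)/2)) (3*k), ← Real.rpow_mul hφ0.le]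
    congr 1
    push_cast
    ring
  rw [hrw] at hbig
  set α : ℝ := φ⁻¹ with hαdef
  have hαφ : φ * α = 1 := mul_inv_cancel₀ (ne_of_gt hφ0)
  have hα0 : (0:ℝ) < α := inv_pos.mpr hφ0
  set r1 : ℤ := round ((n:ℝ) * α) with hr1
  set r2 : ℤ := round ((n:ℝ) * α^2) with hr2
  set y : ℕ → ℤ := triSeq n r1 r2 with hy
  have hy0 : y 0 = n := by simp [hy, triSeq]
  have hy1 : y 1 = r1 := by simp [hy, triSeq]
  have hy2 : y 2 = r2 := by simp [hy, triSeq]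
  have hyrec : ∀ m, y (m+3) = y m - y (m+1) - y (m+2) := by
    intro m; simp [hy, triSeq]
  set g : ℕ → ℝ := fun m => ((y m : ℝ)) - (n:ℝ) * α^m with hg
  have hg0 : g 0 = 0 := by simp [hg, hy0]
  have hg1 : |g 1| ≤ 1/2 := by
    have h := abs_sub_round ((n:ℝ) * α)
    rw [abs_sub_comm] at h
    simpa [hg, hy1, hr1] using h
  have hg2 : |g 2| ≤ 1/2 := by
    have h := abs_sub_round ((n:ℝ) * α^2)
    rw [abs_sub_comm] at h
    simpa [hg, hy2, hr2] using h
  have hαid : α^3 + α^2 + α = 1 := by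
    rw [hαdef]
    field_simp
    linear_combination (-1) * hφ
  have hgrec : ∀ m, g (m+3) = g m - g (m+1) - g (m+2) := by
    intro m
    simp only [hg]
    push_cast [hyrec m]
    linear_combination (-(n:ℝ) * α^m) * hαid
  have hbound := key_bound φ ψ hφ hlo hhi hψ2 hψlo hψhi g hg0 hg1 hg2 hgrec
  have hψ3 : (2.49:ℝ) ≤ ψ^3 := by
    have := pow_le_pow_left₀ (by norm_num : (0:ℝ) ≤ 1.356) hψlo 3
    norm_num at this; linarith
  have hpos : ∀ m i : ℕ, 1 ≤ i → k = m + i → 0 < y m := by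
    intro m i hi hk'
    have hψk : ψ^(3*k) = ψ^(3*m) * ψ^(3*i) := by
      rw [hk', Nat.mul_add, pow_add]
    have hψ3i : ψ^3 ≤ ψ^(3*i) := pow_le_pow_right₀ (by linarith) (by omega)
    have hψm0 : (0:ℝ) < ψ^(3*m) := pow_pos hψ0 _
    have hψsm0 : (0:ℝ) < ψ^m := pow_pos hψ0 _
    have hnb : (n:ℝ) > 0.498 * ψ^(3*m) := by
      rw [hψk] at hbig
      nlinarith [hψm0]
    have hφα : φ^m * α^m = 1 := by rw [← mul_pow, hαφ, one_pow]
    have hψmφ : ψ^(3*m) = ψ^m * φ^m := by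
      have e : 3*m = m + 2*m := by omega
      rw [e, pow_add, pow_mul, hψ2]
    have hαm0 : (0:ℝ) < α^m := pow_pos hα0 m
    have hna : (n:ℝ) * α^m > 0.49 * ψ^m := by
      have h6 := mul_lt_mul_of_pos_right hnb hαm0
      rw [hψmφ] at h6
      nlinarith [hψsm0]
    have hcast : ((y m : ℤ) : ℝ) = (n:ℝ)*α^m + g m := by
      simp [hg]
    have : (0:ℝ) < ((y m : ℤ) : ℝ) := by
      rw [hcast]
      have := abs_le.mp (hbound m)
      linarith [this.1]
    exact_mod_cast this
  refine ⟨fun i => y (k - i), ?_, ?_, ?_, ?_, ?_⟩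
  · intro i h4 hik
    simp only
    have e1 : k - (i-1) = (k-i)+1 := by omega
    have e2 : k - (i-2) = (k-i)+2 := by omega
    have e3 : k - (i-3) = (k-i)+3 := by omega
    rw [e1, e2, e3]
    have := hyrec (k-i)
    omega
  · exact hpos (k-1) 1 le_rfl (by omega)
  · exact hpos (k-2) 2 (by omega) (by omega)
  · exact hpos (k-3) 3 (by omega) (by omega)
  · simp only [Nat.sub_self]
    exact hy0
end
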